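/- arXiv:2004.09255 — 16 statements merged into one kernel-verified Lean document; each statement's English description precedes it below -/
import Mathlib

section
/- Let A be a set and let v : A → A be an injective function. Then A decomposes uniquely as a disjoint union A = A₀ ⊔ A₁ where A₀ and A₁ are left invariant by v (v(A₀) ⊆ A₀ and v(A₁) ⊆ A₁), the restriction v|_{A₀} : A₀ → A₀ is a shift (⋂_{n=0}^∞ (v|_{A₀})^n(A₀) = ∅), and the restriction v|_{A₁} : A₁ → A₁ is a bijection. -/
/-- (Set-theoretic Wold decomposition.) Let `v : A → A` be
injective. Then `A` decomposes uniquely as a disjoint union `A = A₀ ⊔ A₁`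
where `A₀, A₁` are invariant under `v`, `v|_{A₀}` is a shift
(`⋂ₙ v^[n](A₀) = ∅`) and `v|_{A₁}` is a bijection (injective and onto `A₁`). -/
theorem stmt_1 {A : Type*} (v : A → A) (hv : Function.Injective v) :
    ∃ A₀ A₁ : Set A,
      (A₀ ∪ A₁ = Set.univ ∧ A₀ ∩ A₁ = ∅ ∧
        Set.MapsTo v A₀ A₀ ∧ Set.MapsTo v A₁ A₁ ∧
        (⋂ n : ℕ, v^[n] '' A₀) = ∅ ∧ v '' A₁ = A₁) ∧
      ∀ B₀ B₁ : Set A,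
        (B₀ ∪ B₁ = Set.univ ∧ B₀ ∩ B₁ = ∅ ∧
          Set.MapsTo v B₀ B₀ ∧ Set.MapsTo v B₁ B₁ ∧
          (⋂ n : ℕ, v^[n] '' B₀) = ∅ ∧ v '' B₁ = B₁) →
        B₀ = A₀ ∧ B₁ = A₁ := by
  classical
  set A₁ : Set A := ⋂ n : ℕ, Set.range v^[n] with hA₁def
  have hmem : ∀ x, x ∈ A₁ ↔ ∀ n : ℕ, ∃ y, v^[n] y = x := by
    intro x; simp [hA₁def, Set.mem_iInter, Set.mem_range]
  -- invariance of A₁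
  have hA₁inv : Set.MapsTo v A₁ A₁ := by
    intro x hx
    rw [hmem] at hx ⊢
    intro n
    obtain ⟨y, hy⟩ := hx n
    exact ⟨v y, by rw [← Function.iterate_succ_apply, Function.iterate_succ_apply', hy]⟩
  -- invariance of A₁ᶜ
  have hA₀inv : Set.MapsTo v A₁ᶜ A₁ᶜ := by
    intro x hx hvx
    apply hx
    rw [hmem] at hvx ⊢
    intro n
    obtain ⟨y, hy⟩ := hvx (n + 1)
    rw [Function.iterate_succ_apply'] at hy
    exact ⟨y, hv hy⟩
  -- v '' A₁ = A₁
  have himg : v '' A₁ = A₁ := by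
    apply Set.Subset.antisymm (hA₁inv.image_subset)
    intro x hx
    have hx' := (hmem x).mp hx
    obtain ⟨y, hy⟩ := hx' 1
    simp only [Function.iterate_one] at hy
    refine ⟨y, ?_, hy⟩
    rw [hmem]
    intro n
    obtain ⟨z, hz⟩ := hx' (n + 1)
    rw [Function.iterate_succ_apply'] at hz
    exact ⟨z, hv (by rw [hz, hy])⟩
  -- shift property
  have hshift : (⋂ n : ℕ, v^[n] '' A₁ᶜ) = ∅ := by
    ext x
    simp only [Set.mem_iInter, Set.mem_empty_iff_false, iff_false]
    intro h
    -- x ∈ A₁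
    have hxA₁ : x ∈ A₁ := by
      rw [hmem]; intro n
      obtain ⟨y, _, hy⟩ := h n
      exact ⟨y, hy⟩
    obtain ⟨y, hy0, hy⟩ := h 1
    simp only [Function.iterate_one] at hy
    apply hy0
    rw [hmem]
    intro n
    have := (hmem x).mp hxA₁ (n + 1)
    obtain ⟨z, hz⟩ := this
    rw [Function.iterate_succ_apply'] at hz
    exact ⟨z, hv (by rw [hz, hy])⟩
  refine ⟨A₁ᶜ, A₁, ⟨Set.compl_union_self A₁, Set.compl_inter_self A₁, hA₀inv, hA₁inv, hshift, himg⟩, ?_⟩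
  rintro B₀ B₁ ⟨hBu, hBi, hB₀inv, hB₁inv, hBshift, hBimg⟩
  have hBiter : ∀ n : ℕ, v^[n] '' B₁ = B₁ := by
    intro n
    induction n with
    | zero => simp
    | succ n ih => rw [Function.iterate_succ', Set.image_comp, ih, hBimg]
  have hB₁sub : B₁ ⊆ A₁ := by
    intro x hx
    rw [hmem]
    intro n
    rw [← hBiter n] at hx
    obtain ⟨y, _, hy⟩ := hx
    exact ⟨y, hy⟩
  have hB₁eq : B₁ = A₁ := by
    apply Set.Subset.antisymm hB₁sub
    intro x hx
    by_contra hxB₁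
    have hxB₀ : ∀ z : A, z ∉ B₁ → z ∈ B₀ := by
      intro z hz
      have : z ∈ B₀ ∪ B₁ := by rw [hBu]; trivial
      exact this.resolve_right hz
    have : x ∈ ⋂ n : ℕ, v^[n] '' B₀ := by
      rw [Set.mem_iInter]
      intro n
      obtain ⟨y, hy⟩ := (hmem x).mp hx n
      refine ⟨y, ?_, hy⟩
      apply hxB₀
      intro hyB₁
      apply hxB₁
      have : v^[n] y ∈ v^[n] '' B₁ := ⟨y, hyB₁, rfl⟩
      rw [hBiter n, hy] at this
      exact this
    rw [hBshift] at this
    exact this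
  have hB₀eq : B₀ = A₁ᶜ := by
    ext z
    constructor
    · intro hz hzA₁
      have : z ∈ B₀ ∩ B₁ := ⟨hz, hB₁eq ▸ hzA₁⟩
      rw [hBi] at this; exact this
    · intro hz
      have : z ∈ B₀ ∪ B₁ := by rw [hBu]; trivial
      rcases this with h | h
      · exact h
      · exact absurd (hB₁eq ▸ h) hz
  exact ⟨hB₀eq, hB₁eq⟩
end

section
/- Every function h : A → A on a set A admits a minimal injective power dilation. Explicitly, taking B = A × ℤ₊, i(a) = (a,0), v(a,m) = (a, m+1), and p(a,m) = (h^m(a), 0), the quadruple (B, i, v, p) is a minimal injective power dilation of h. -/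
/-- (Standard dilation / set-theoretic Sz. Nagy dilation.)
Every `h : A → A` admits a minimal injective power dilation: with
`B = A × ℤ₊`, `i(a) = (a,0)`, `v(a,m) = (a,m+1)`, `p(a,m) = (h^[m] a, 0)`,
the quadruple `(B,i,v,p)` satisfies: `i, v` injective, `p` idempotent with
`p(B) = i(A)`, `i(h^[n] a) = p(v^[n](i a))` for all `a, n`, and minimality
`B = ⋃ₙ v^[n](i(A))`. -/
theorem stmt_3 {A : Type*} (h : A → A) :
    let B := A × ℕ
    let i : A → B := fun a => (a, 0)
    let v : B → B := fun x => (x.1, x.2 + 1)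
    let p : B → B := fun x => (h^[x.2] x.1, 0)
    Function.Injective i ∧ Function.Injective v ∧ p ∘ p = p ∧
      Set.range p = Set.range i ∧
      (∀ (a : A) (n : ℕ), i (h^[n] a) = p (v^[n] (i a))) ∧
      (⋃ n : ℕ, v^[n] '' Set.range i) = Set.univ := by
  intro B i v p
  have hv : ∀ (x : B) (n : ℕ), v^[n] x = (x.1, x.2 + n) := by
    intro x n
    induction n with
    | zero => simp
    | succ k ih => rw [Function.iterate_succ_apply', ih]; simp [v]; ring
  refine ⟨?_, ?_, ?_, ?_, ?_, ?_⟩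
  · intro a b hab; simpa [i] using congrArg Prod.fst hab
  · intro x y hxy
    have h1 := congrArg Prod.fst hxy
    have h2 := congrArg Prod.snd hxy
    simp only [v] at h1 h2
    exact Prod.ext h1 (by omega)
  · funext x; simp [p]
  · ext x
    constructor
    · rintro ⟨y, rfl⟩; exact ⟨h^[y.2] y.1, rfl⟩
    · rintro ⟨a, rfl⟩; exact ⟨(a, 0), rfl⟩
  · intro a n; simp [i, p, hv]
  · ext x
    simp only [Set.mem_iUnion, Set.mem_image, Set.mem_range, Set.mem_univ, iff_true]
    exact ⟨x.2, (x.1, 0), ⟨x.1, rfl⟩, by simp [hv]⟩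
end

section
/- Every function h : A → A on a set A admits a minimal defect space, i.e. there exists a defect space D for h such that no proper subset of D is a defect space for h. -/
/-- Every function `h : A → A` admits a minimal defect
space: there is `D ⊆ A` with `h` injective on `Dᶜ`, such that no proper
subset of `D` is a defect space for `h`. -/
theorem stmt_4 {A : Type*} (h : A → A) :
    ∃ D : Set A, Set.InjOn h Dᶜ ∧ ∀ D' : Set A, D' ⊂ D → ¬ Set.InjOn h D'ᶜ := by
  have := zorn_superset {D : Set A | Set.InjOn h Dᶜ} ?_
  · obtain ⟨D, hD⟩ := this
    refine ⟨D, hD.prop, fun D' hss hinj => ?_⟩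
    exact hss.not_ge (hD.le_of_le hinj hss.subset)
  · intro c hc hchain
    refine ⟨⋂₀ c, ?_, fun s hs => Set.sInter_subset_of_mem hs⟩
    intro x hx y hy hxy
    rw [Set.compl_sInter, Set.mem_sUnion] at hx hy
    obtain ⟨_, ⟨Dx, hDx, rfl⟩, hx⟩ := hx
    obtain ⟨_, ⟨Dy, hDy, rfl⟩, hy⟩ := hy
    rcases eq_or_ne Dx Dy with rfl | hne
    · exact hc hDx hx hy hxy
    · rcases hchain hDx hDy hne with hle | hle
      · exact hc hDx hx (Set.compl_subset_compl.2 hle hy) hxy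
      · exact hc hDy (Set.compl_subset_compl.2 hle hx) hy hxy
end

section
/- Let h : A → A be a function on a set A and let D ⊆ A be a defect space for h. Define B_D = (Dᶜ × {0}) ∪ (D × ℤ₊), i_D : A → B_D by i_D(a) = (a,0), v_D : B_D → B_D by v_D(a,0) = (h(a),0) for a ∈ Dᶜ and v_D(a,m) = (a, m+1) for a ∈ D, m ∈ ℤ₊, and p_D : B_D → B_D by p_D(a,m) = (h^m(a), 0). Then (B_D, i_D, v_D, p_D) is a co-invariant minimal injective power dilation of h. -/
open scoped Classical

/-- `B_D = (Dᶜ × {0}) ∪ (D × ℤ₊)`, as a subtype of `A × ℤ₊`. -/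
def BD {A : Type*} (D : Set A) : Type _ :=
  {x : A × ℕ // x.1 ∈ D ∨ x.2 = 0}

/-- `i_D(a) = (a, 0)`. -/
def iD {A : Type*} (D : Set A) : A → BD D := fun a => ⟨(a, 0), Or.inr rfl⟩

/-- `v_D(a,0) = (h(a),0)` for `a ∈ Dᶜ`, `v_D(a,m) = (a,m+1)` for `a ∈ D`. -/
noncomputable def vD {A : Type*} (h : A → A) (D : Set A) : BD D → BD D :=
  fun x =>
    if hx : x.val.1 ∈ D then ⟨(x.val.1, x.val.2 + 1), Or.inl hx⟩
    else ⟨(h x.val.1, 0), Or.inr rfl⟩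

/-- `p_D(a,m) = (h^[m](a), 0)`. -/
def pD {A : Type*} (h : A → A) (D : Set A) : BD D → BD D :=
  fun x => ⟨(h^[x.val.2] x.val.1, 0), Or.inr rfl⟩

lemma vD_step {A : Type*} (h : A → A) (D : Set A) (x : BD D) :
    h^[(vD h D x).val.2] (vD h D x).val.1 = h^[x.val.2 + 1] x.val.1 := by
  unfold vD
  split_ifs with hx
  · simp [hx]
  · have h0 : x.val.2 = 0 := x.property.resolve_left hx
    simp [h0, hx]

lemma vD_iter {A : Type*} (h : A → A) (D : Set A) (n : ℕ) (x : BD D) :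
    h^[((vD h D)^[n] x).val.2] ((vD h D)^[n] x).val.1 = h^[n] (h^[x.val.2] x.val.1) := by
  induction n with
  | zero => simp
  | succ n ih =>
      rw [Function.iterate_succ_apply', vD_step, Function.iterate_succ_apply',
        Function.iterate_succ_apply', ih]

lemma vD_iter_mem {A : Type*} (h : A → A) (D : Set A) (a : A) (ha : a ∈ D) (m : ℕ) :
    (vD h D)^[m] (iD D a) = ⟨(a, m), Or.inl ha⟩ := by
  induction m with
  | zero => rfl
  | succ m ih =>
      rw [Function.iterate_succ_apply', ih]
      simp [vD, ha]
      rfl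

/-- If `D` is a defect space for `h : A → A` (i.e. `h` is
injective on `Dᶜ`), then `(B_D, i_D, v_D, p_D)` is a co-invariant minimal
injective power dilation of `h`. -/
theorem stmt_5 {A : Type*} (h : A → A) (D : Set A) (hD : Set.InjOn h Dᶜ) :
    Function.Injective (iD D) ∧
    Function.Injective (vD h D) ∧
    pD h D ∘ pD h D = pD h D ∧
    Set.range (pD h D) = Set.range (iD D) ∧
    (∀ (a : A) (n : ℕ), iD D (h^[n] a) = pD h D ((vD h D)^[n] (iD D a))) ∧
    (⋃ n : ℕ, (vD h D)^[n] '' Set.range (iD D)) = Set.univ ∧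
    vD h D '' (Set.range (iD D))ᶜ ⊆ (Set.range (iD D))ᶜ := by
  refine ⟨?_, ?_, ?_, ?_, ?_, ?_, ?_⟩
  · intro a b hab
    have := congrArg (fun z : BD D => z.val.1) hab
    simpa [iD] using this
  · intro x y hxy
    unfold vD BD at hxy
    split_ifs at hxy with hx hy hy
    · apply Subtype.ext
      have := Subtype.ext_iff.mp hxy
      simp [Prod.ext_iff] at this
      exact Prod.ext this.1 this.2
    · exfalso
      have := Subtype.ext_iff.mp hxy
      simp [Prod.ext_iff] at this
    · exfalso
      have := Subtype.ext_iff.mp hxy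
      simp [Prod.ext_iff] at this
    · have hx0 : x.val.2 = 0 := x.property.resolve_left hx
      have hy0 : y.val.2 = 0 := y.property.resolve_left hy
      have := Subtype.ext_iff.mp hxy
      simp [Prod.ext_iff] at this
      exact Subtype.ext (Prod.ext (hD hx hy this) (hx0.trans hy0.symm))
  · funext x
    simp [pD]
    rfl
  · ext x
    constructor
    · rintro ⟨y, rfl⟩
      exact ⟨h^[y.val.2] y.val.1, rfl⟩
    · rintro ⟨a, rfl⟩
      exact ⟨iD D a, rfl⟩
  · intro a n
    apply Subtype.ext
    simp only [pD, iD]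
    have := vD_iter h D n (iD D a)
    simp only [iD] at this
    simp at this
    simp [this]
  · ext x
    simp only [Set.mem_iUnion, Set.mem_univ, iff_true]
    rcases x.property with hx | hx
    · exact ⟨x.val.2, iD D x.val.1, ⟨x.val.1, rfl⟩, by rw [vD_iter_mem h D _ hx]; exact Subtype.ext rfl⟩
    · exact ⟨0, iD D x.val.1, ⟨x.val.1, rfl⟩, Subtype.ext (Prod.ext rfl hx.symm)⟩
  · rintro y ⟨x, hx, rfl⟩ ⟨a, ha⟩
    apply hx
    have hx2 : x.val.2 ≠ 0 := by
      intro h0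
      exact hx ⟨x.val.1, Subtype.ext (Prod.ext rfl h0.symm)⟩
    have hxD : x.val.1 ∈ D := x.property.resolve_right hx2
    have := Subtype.ext_iff.mp ha
    simp [iD, vD, hxD, Prod.ext_iff] at this
end

section
/- Let (B, i, v, p) be a co-invariant minimal injective power dilation of a function h : A → A. Then D = { a ∈ A : v(i(a)) ∉ i(A) } is a defect space for h. Moreover, (B, i, v, p) is in bijective correspondence with (B_D, i_D, v_D, p_D): there exists a bijection ψ : B_D → B such that v∘ψ = ψ∘v_D, p∘ψ = ψ∘p_D, and ψ∘i_D = i. -/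
open scoped Classical

/-- Let `(B,i,v,p)` be a co-invariant minimal injective
power dilation of `h : A → A`. Then `D = {a | v(i a) ∉ i(A)}` is a defect
space for `h`, and `(B,i,v,p)` is bijectively equivalent to
`(B_D, i_D, v_D, p_D)` via a bijection `ψ : B_D → B` with `v ∘ ψ = ψ ∘ v_D`,
`p ∘ ψ = ψ ∘ p_D`, `ψ ∘ i_D = i`. -/
theorem stmt_6 {A : Type*} {B : Type*} (h : A → A)
    (i : A → B) (v : B → B) (p : B → B)
    (hi : Function.Injective i) (hv : Function.Injective v)
    (hp : p ∘ p = p) (hrange : Set.range p = Set.range i)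
    (hdil : ∀ (a : A) (n : ℕ), i (h^[n] a) = p (v^[n] (i a)))
    (hmin : (⋃ n : ℕ, v^[n] '' Set.range i) = Set.univ)
    (hcoinv : v '' (Set.range i)ᶜ ⊆ (Set.range i)ᶜ) :
    let D : Set A := {a : A | v (i a) ∉ Set.range i}
    Set.InjOn h Dᶜ ∧
    ∃ ψ : BD D → B, Function.Bijective ψ ∧
      v ∘ ψ = ψ ∘ vD h D ∧ p ∘ ψ = ψ ∘ pD h D ∧ ψ ∘ iD D = i := by

  intro D
  have pid : ∀ b ∈ Set.range i, p b = b := by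
    intro b hb
    rw [← hrange] at hb
    obtain ⟨y, rfl⟩ := hb
    exact congrFun hp y
  have key : ∀ a : A, a ∉ D → v (i a) = i (h a) := by
    intro a ha
    have hmem : v (i a) ∈ Set.range i := not_not.mp ha
    have h1 := hdil a 1
    simp only [Function.iterate_one] at h1
    rw [h1, pid _ hmem]
  have notin : ∀ (j : ℕ) (x : B), x ∉ Set.range i → v^[j] x ∉ Set.range i := by
    intro j
    induction j with
    | zero => intro x hx; simpa using hx
    | succ j ih =>
        intro x hx
        rw [Function.iterate_succ_apply]
        exact ih _ (hcoinv (Set.mem_image_of_mem v hx))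
  constructor
  · intro a ha b hb hab
    have h1 : v (i a) = v (i b) := by
      rw [key a ha, key b hb, hab]
    exact hi (hv h1)
  · have aux : ∀ (m k : ℕ) (a b : A), (a ∈ D ∨ m = 0) → (b ∈ D ∨ k = 0) →
        m ≤ k → v^[m] (i a) = v^[k] (i b) → a = b ∧ m = k := by
      intro m k a b ha hb hmk heq
      obtain ⟨d, rfl⟩ := Nat.exists_eq_add_of_le hmk
      have heq' : i a = v^[d] (i b) := by
        rw [Function.iterate_add_apply] at heq
        exact (hv.iterate m) heq
      rcases Nat.eq_zero_or_pos d with rfl | hd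
      · simp only [Function.iterate_zero_apply] at heq'
        exact ⟨hi heq', rfl⟩
      · have hbD : b ∈ D := hb.resolve_right (by omega)
        obtain ⟨d', rfl⟩ := Nat.exists_eq_succ_of_ne_zero (Nat.pos_iff_ne_zero.mp hd)
        have hni : v^[d' + 1] (i b) ∉ Set.range i := by
          rw [Function.iterate_succ_apply]
          exact notin d' _ hbD
        exact absurd ⟨a, heq'⟩ hni
    refine ⟨fun x => v^[x.val.2] (i x.val.1), ⟨?_, ?_⟩, ?_, ?_, ?_⟩
    · rintro ⟨⟨a, m⟩, hx⟩ ⟨⟨b, k⟩, hy⟩ heq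
      simp only at heq
      rcases le_total m k with hle | hle
      · obtain ⟨h1, h2⟩ := aux m k a b hx hy hle heq
        subst h1; subst h2; rfl
      · obtain ⟨h1, h2⟩ := aux k m b a hy hx hle heq.symm
        subst h1; subst h2; rfl
    · have surjaux : ∀ (n : ℕ) (a : A), ∃ x : BD D, v^[x.val.2] (i x.val.1) = v^[n] (i a) := by
        intro n
        induction n with
        | zero => intro a; exact ⟨⟨(a, 0), Or.inr rfl⟩, rfl⟩
        | succ n ih =>
            intro a
            by_cases haD : a ∈ D
            · exact ⟨⟨(a, n + 1), Or.inl haD⟩, rfl⟩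
            · obtain ⟨x, hx⟩ := ih (h a)
              refine ⟨x, ?_⟩
              rw [hx, Function.iterate_succ_apply, key a haD]
      intro b
      have hb : b ∈ ⋃ n : ℕ, v^[n] '' Set.range i := by
        rw [hmin]; exact Set.mem_univ b
      simp only [Set.mem_iUnion, Set.mem_image, Set.mem_range] at hb
      obtain ⟨n, _, ⟨a, rfl⟩, rfl⟩ := hb
      exact surjaux n a
    · funext x
      obtain ⟨⟨a, m⟩, hx⟩ := x
      show v (v^[m] (i a)) = v^[(vD h D ⟨(a, m), hx⟩).val.2] (i (vD h D ⟨(a, m), hx⟩).val.1)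
      by_cases haD : a ∈ D
      · rw [show vD h D ⟨(a, m), hx⟩ = ⟨(a, m + 1), Or.inl haD⟩ from dif_pos haD]
        exact (Function.iterate_succ_apply' v m (i a)).symm
      · rw [show vD h D ⟨(a, m), hx⟩ = ⟨(h a, 0), Or.inr rfl⟩ from dif_neg haD]
        have hm : m = 0 := hx.resolve_left haD
        subst hm
        exact key a haD
    · funext x
      obtain ⟨⟨a, m⟩, hx⟩ := x
      show p (v^[m] (i a)) = i (h^[m] a)
      exact (hdil a m).symm
    · funext a
      rfl
end

section
/- Let h : A → A be a function such that ⋂_{n=0}^∞ h^n(A) = ∅. Then for every (not necessarily co-invariant) minimal injective power dilation (B, i, v, p) of h, the map v is a shift, i.e. ⋂_{n=0}^∞ v^n(B) = ∅. -/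
/-- Let `h : A → A` satisfy `⋂ₙ h^[n](A) = ∅`. Then for
every (not necessarily co-invariant) minimal injective power dilation
`(B,i,v,p)` of `h`, the map `v` is a shift: `⋂ₙ v^[n](B) = ∅`. -/
theorem stmt_8 {A : Type*} {B : Type*} (h : A → A)
    (hpure : (⋂ n : ℕ, h^[n] '' (Set.univ : Set A)) = ∅)
    (i : A → B) (v : B → B) (p : B → B)
    (hi : Function.Injective i) (hv : Function.Injective v)
    (hp : p ∘ p = p) (hrange : Set.range p = Set.range i)
    (hdil : ∀ (a : A) (n : ℕ), i (h^[n] a) = p (v^[n] (i a)))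
    (hmin : (⋃ n : ℕ, v^[n] '' Set.range i) = Set.univ) :
    (⋂ n : ℕ, v^[n] '' (Set.univ : Set B)) = ∅ := by
  have hpfix : ∀ x : B, x ∈ Set.range i → p x = x := by
    intro x hx
    rw [← hrange] at hx
    obtain ⟨y, rfl⟩ := hx
    exact congrFun hp y
  by_contra hne
  obtain ⟨b, hb⟩ := Set.nonempty_iff_ne_empty.2 hne
  simp only [Set.mem_iInter, Set.image_univ, Set.mem_range] at hb
  have hbU : b ∈ ⋃ n : ℕ, v^[n] '' Set.range i := hmin ▸ Set.mem_univ b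
  simp only [Set.mem_iUnion, Set.mem_image, Set.mem_range] at hbU
  obtain ⟨m, x, ⟨a, rfl⟩, hba⟩ := hbU
  have key : ∀ n : ℕ, ∃ a', h^[n] a' = a := by
    intro n
    obtain ⟨c, hc⟩ := hb (m + n)
    have h1 : v^[m] (v^[n] c) = v^[m] (i a) := by
      rw [← Function.iterate_add_apply, hc, hba]
    have h2 : v^[n] c = i a := (hv.iterate m) h1
    have hcU : c ∈ ⋃ k : ℕ, v^[k] '' Set.range i := hmin ▸ Set.mem_univ c
    simp only [Set.mem_iUnion, Set.mem_image, Set.mem_range] at hcU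
    obtain ⟨k, y, ⟨a', rfl⟩, hck⟩ := hcU
    have h3 : i a = v^[n + k] (i a') := by
      rw [Function.iterate_add_apply, hck, h2]
    have h4 : i a = i (h^[n + k] a') := by
      rw [hdil, ← h3, hpfix _ ⟨a, rfl⟩]
    refine ⟨h^[k] a', ?_⟩
    rw [← Function.iterate_add_apply]
    exact (hi h4).symm
  have hmem : a ∈ (⋂ n : ℕ, h^[n] '' (Set.univ : Set A)) := by
    simp only [Set.mem_iInter, Set.image_univ, Set.mem_range]
    exact key
  rw [hpure] at hmem
  exact hmem
end

section
/- Let h₁ : A₁ → A₁ and h₂ : A₂ → A₂ be functions, and for j = 1, 2 let (B_j, i_j, v_j, p_j) be the standard dilation of h_j. If s : A₂ → A₁ is a function with s∘h₂ = h₁∘s, then there exists a function r : B₂ → B₁ such that r∘v₂ = v₁∘r, r∘p₂ = p₁∘r, and r∘i₂ = i₁∘s. Conversely, if r : B₂ → B₁ is a function satisfying r∘v₂ = v₁∘r and r∘p₂ = p₁∘r, then there exists a unique function s : A₂ → A₁ satisfying r∘i₂ = i₁∘s and s∘h₂ = h₁∘s. -/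
/-- The embedding of the standard dilation: `i(a) = (a,0)`. -/
def stdI {A : Type*} : A → A × ℕ := fun a => (a, 0)

/-- The injective map of the standard dilation: `v(a,m) = (a,m+1)`. -/
def stdV {A : Type*} : A × ℕ → A × ℕ := fun x => (x.1, x.2 + 1)

/-- The idempotent of the standard dilation: `p(a,m) = (h^[m] a, 0)`. -/
def stdP {A : Type*} (h : A → A) : A × ℕ → A × ℕ := fun x => (h^[x.2] x.1, 0)

/-- (Set-theoretic intertwining lifting for standard
dilations.) Let `(B_j, i_j, v_j, p_j)` be the standard dilation of
`h_j : A_j → A_j`, `j = 1,2`. If `s ∘ h₂ = h₁ ∘ s` then there is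
`r : B₂ → B₁` with `r ∘ v₂ = v₁ ∘ r`, `r ∘ p₂ = p₁ ∘ r`, `r ∘ i₂ = i₁ ∘ s`.
Conversely any `r` with `r ∘ v₂ = v₁ ∘ r` and `r ∘ p₂ = p₁ ∘ r` determines
a unique `s` with `r ∘ i₂ = i₁ ∘ s` and `s ∘ h₂ = h₁ ∘ s`. -/
theorem stmt_9 {A₁ : Type*} {A₂ : Type*} (h₁ : A₁ → A₁) (h₂ : A₂ → A₂) :
    (∀ s : A₂ → A₁, s ∘ h₂ = h₁ ∘ s →
      ∃ r : A₂ × ℕ → A₁ × ℕ,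
        r ∘ stdV = stdV ∘ r ∧ r ∘ stdP h₂ = stdP h₁ ∘ r ∧
          r ∘ stdI = stdI ∘ s) ∧
    (∀ r : A₂ × ℕ → A₁ × ℕ, r ∘ stdV = stdV ∘ r → r ∘ stdP h₂ = stdP h₁ ∘ r →
      ∃! s : A₂ → A₁, r ∘ stdI = stdI ∘ s ∧ s ∘ h₂ = h₁ ∘ s) := by
  constructor
  · intro s hs
    refine ⟨fun x => (s x.1, x.2), rfl, ?_, rfl⟩
    funext x
    simp only [Function.comp, stdP]
    have : ∀ n a, s (h₂^[n] a) = h₁^[n] (s a) := by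
      intro n
      induction n with
      | zero => intro a; simp
      | succ n ih =>
        intro a
        rw [Function.iterate_succ_apply, Function.iterate_succ_apply, ih,
          show s (h₂ a) = h₁ (s a) from congrFun hs a]
    rw [this]
  · intro r hv hp
    have key : ∀ a : A₂, r (a, 0) = ((r (a, 0)).1, 0) := by
      intro a
      have := congrFun hp (a, 0)
      simp only [Function.comp, stdP, Function.iterate_zero, id] at this
      rw [this]
    refine ⟨fun a => (r (a, 0)).1, ⟨?_, ?_⟩, ?_⟩
    · funext a
      simp only [Function.comp, stdI]
      exact key a
    · funext a
      simp only [Function.comp]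
      have h1 := congrFun hp (a, 1)
      simp only [Function.comp, stdP, Function.iterate_one] at h1
      have h2 := congrFun hv (a, 0)
      simp only [Function.comp, stdV] at h2
      rw [h1, h2, key a]; simp
    · intro s ⟨hi, _⟩
      funext a
      have := congrFun hi a
      simp only [Function.comp, stdI] at this
      rw [this]
end

section
/- For j = 1, 2 let h_j : A_j → A_j be a function, let D_j be a defect space for h_j, and consider the dilation (B_{D_j}, i_{D_j}, v_{D_j}, p_{D_j}). Suppose s : A₂ → A₁ is a function such that s(D₂ᶜ) ⊆ D₁ᶜ, s(D₂) ⊆ D₁, and s∘h₂ = h₁∘s. Then there exists a function r : B_{D₂} → B_{D₁} such that r∘v_{D₂} = v_{D₁}∘r, r∘p_{D₂} = p_{D₁}∘r, and r∘i_{D₂} = i_{D₁}∘s. Conversely, if r : B_{D₂} → B_{D₁} satisfies r∘v_{D₂} = v_{D₁}∘r and r∘p_{D₂} = p_{D₁}∘r, then there exists a unique function s : A₂ → A₁ satisfying r∘i_{D₂} = i_{D₁}∘s and s∘h₂ = h₁∘s; moreover this s satisfies s(D₂ᶜ) ⊆ D₁ᶜ. -/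
open scoped Classical

/-- (Intertwining lifting for dilations with defect
spaces.) For `j = 1,2` let `D_j` be a defect space for `h_j : A_j → A_j`
and `(B_{D_j}, i_{D_j}, v_{D_j}, p_{D_j})` the associated dilation. If
`s : A₂ → A₁` satisfies `s(D₂ᶜ) ⊆ D₁ᶜ`, `s(D₂) ⊆ D₁`, `s ∘ h₂ = h₁ ∘ s`,
then there is `r : B_{D₂} → B_{D₁}` with `r ∘ v_{D₂} = v_{D₁} ∘ r`,
`r ∘ p_{D₂} = p_{D₁} ∘ r`, `r ∘ i_{D₂} = i_{D₁} ∘ s`. Conversely any such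
`r` determines a unique `s` with `r ∘ i_{D₂} = i_{D₁} ∘ s` and
`s ∘ h₂ = h₁ ∘ s`; moreover this `s` satisfies `s(D₂ᶜ) ⊆ D₁ᶜ`. -/
theorem stmt_10 {A₁ : Type*} {A₂ : Type*} (h₁ : A₁ → A₁) (h₂ : A₂ → A₂)
    (D₁ : Set A₁) (D₂ : Set A₂)
    (hD₁ : Set.InjOn h₁ D₁ᶜ) (hD₂ : Set.InjOn h₂ D₂ᶜ) :
    (∀ s : A₂ → A₁, s '' D₂ᶜ ⊆ D₁ᶜ → s '' D₂ ⊆ D₁ → s ∘ h₂ = h₁ ∘ s →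
      ∃ r : BD D₂ → BD D₁,
        r ∘ vD h₂ D₂ = vD h₁ D₁ ∘ r ∧ r ∘ pD h₂ D₂ = pD h₁ D₁ ∘ r ∧
          r ∘ iD D₂ = iD D₁ ∘ s) ∧
    (∀ r : BD D₂ → BD D₁, r ∘ vD h₂ D₂ = vD h₁ D₁ ∘ r →
      r ∘ pD h₂ D₂ = pD h₁ D₁ ∘ r →
      ∃ s : A₂ → A₁,
        (r ∘ iD D₂ = iD D₁ ∘ s ∧ s ∘ h₂ = h₁ ∘ s) ∧
        s '' D₂ᶜ ⊆ D₁ᶜ ∧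
        ∀ s' : A₂ → A₁, (r ∘ iD D₂ = iD D₁ ∘ s' ∧ s' ∘ h₂ = h₁ ∘ s') →
          s' = s) := by
  constructor
  · intro s hsc hsd hcomm
    have hsemi : Function.Semiconj s h₂ h₁ := fun a => congrFun hcomm a
    refine ⟨fun x => ⟨(s x.val.1, x.val.2), ?_⟩, ?_, ?_, ?_⟩
    · rcases x.prop with h | h
      · exact Or.inl (hsd ⟨x.val.1, h, rfl⟩)
      · exact Or.inr h
    · funext x
      by_cases hx : x.val.1 ∈ D₂
      · have hs : s x.val.1 ∈ D₁ := hsd ⟨x.val.1, hx, rfl⟩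
        have e1 : vD h₂ D₂ x = (⟨(x.val.1, x.val.2 + 1), Or.inl hx⟩ : BD D₂) := dif_pos hx
        have e2 : vD h₁ D₁ (⟨(s x.val.1, x.val.2), Or.inl hs⟩ : BD D₁) =
            (⟨(s x.val.1, x.val.2 + 1), Or.inl hs⟩ : BD D₁) := dif_pos hs
        exact Subtype.ext ((congrArg (fun y : BD D₂ => ((s y.val.1, y.val.2) : A₁ × ℕ)) e1).trans
          (congrArg Subtype.val e2).symm)
      · have hs : s x.val.1 ∉ D₁ := hsc ⟨x.val.1, hx, rfl⟩
        have e1 : vD h₂ D₂ x = (⟨(h₂ x.val.1, 0), Or.inr rfl⟩ : BD D₂) := dif_neg hx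
        have e2 : ∀ p, vD h₁ D₁ (⟨(s x.val.1, x.val.2), p⟩ : BD D₁) =
            (⟨(h₁ (s x.val.1), 0), Or.inr rfl⟩ : BD D₁) := fun p => dif_neg hs
        exact Subtype.ext ((congrArg (fun y : BD D₂ => ((s y.val.1, y.val.2) : A₁ × ℕ)) e1).trans
          ((Prod.ext (hsemi.eq _) rfl : ((s (h₂ x.val.1), 0) : A₁ × ℕ) = (h₁ (s x.val.1), 0)).trans
            (congrArg Subtype.val (e2 _)).symm))
    · funext x
      exact Subtype.ext (Prod.ext ((hsemi.iterate_right x.val.2).eq x.val.1) rfl)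
    · funext a
      rfl
  · intro r hrv hrp
    set s : A₂ → A₁ := fun a => (r (iD D₂ a)).val.1 with hs
    have hri : ∀ a, r (iD D₂ a) = iD D₁ (s a) := by
      intro a
      have h0 : pD h₂ D₂ (iD D₂ a) = iD D₂ a := rfl
      have := congrFun hrp (iD D₂ a)
      simp only [Function.comp_apply, h0] at this
      have m0 : (r (iD D₂ a)).val.2 = 0 := congrArg (fun x : BD D₁ => x.val.2) this
      exact Subtype.ext (Prod.ext rfl m0)
    have key : ∀ a, iD D₂ (h₂ a) = pD h₂ D₂ (vD h₂ D₂ (iD D₂ a)) := by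
      intro a
      by_cases hx : a ∈ D₂ <;> simp [iD, vD, pD, hx] <;> rfl
    have hsh : ∀ a, s (h₂ a) = h₁ (s a) := by
      intro a
      have h1 : r (iD D₂ (h₂ a)) = pD h₁ D₁ (vD h₁ D₁ (r (iD D₂ a))) := by
        have e1 := congrFun hrp (vD h₂ D₂ (iD D₂ a))
        have e2 := congrFun hrv (iD D₂ a)
        simp only [Function.comp_apply] at e1 e2
        rw [key a, e1, e2]
      rw [hri a] at h1
      have h2 : pD h₁ D₁ (vD h₁ D₁ (iD D₁ (s a))) = iD D₁ (h₁ (s a)) := by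
        by_cases hy : s a ∈ D₁ <;> simp [iD, vD, pD, hy] <;> rfl
      rw [h2] at h1
      exact congrArg (fun x : BD D₁ => x.val.1) h1
    refine ⟨s, ⟨funext fun a => hri a, funext fun a => hsh a⟩, ?_, ?_⟩
    · rintro b ⟨a, ha, rfl⟩
      intro hsD
      have h1 : r (vD h₂ D₂ (iD D₂ a)) = vD h₁ D₁ (r (iD D₂ a)) := congrFun hrv _
      have h2 : vD h₂ D₂ (iD D₂ a) = iD D₂ (h₂ a) := by
        simp only [vD, iD]
        exact dif_neg ha
      rw [h2, hri (h₂ a), hri a] at h1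
      have h3 : vD h₁ D₁ (iD D₁ (s a)) = ⟨(s a, 1), Or.inl hsD⟩ := by
        simp [iD, vD, hsD]
        rfl
      rw [h3] at h1
      have := congrArg (fun x : BD D₁ => x.val.2) h1
      simp [iD] at this
    · intro s' ⟨hs'i, _⟩
      funext a
      have := (congrFun hs'i a).symm.trans (hri a)
      exact congrArg (fun x : BD D₁ => x.val.1) this
end

section
/- Let h : A → A be a function on a set A. Then there exists a quadruple (C, i, u, p) where C is a set, i : A → C is injective, u : C → C is a bijection, p : C → C is an idempotent (p∘p = p) with p(C) = i(A), such that i(h^n(a)) = p(u^n(i(a))) for all a ∈ A and n ∈ ℤ₊, and C = ⋃_{n∈ℤ} u^n(i(A)). -/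
lemma shift_pow_apply {A : Type u} (n : ℕ) (a : A) (m : ℤ) :
    ((Equiv.prodCongr (Equiv.refl A) (Equiv.addRight (1:ℤ))) ^ n) (a, m) = (a, m + n) := by
  induction n generalizing m with
  | zero => simp
  | succ k ih =>
      rw [pow_succ, Equiv.Perm.mul_apply, show ((Equiv.prodCongr (Equiv.refl A)
        (Equiv.addRight (1:ℤ)))) (a, m) = (a, m + 1) from rfl, ih]
      simp only [Prod.mk.injEq, true_and, Nat.cast_add, Nat.cast_one]; ring

lemma shift_zpow_apply {A : Type u} (n : ℤ) (a : A) (m : ℤ) :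
    ((Equiv.prodCongr (Equiv.refl A) (Equiv.addRight (1:ℤ))) ^ n) (a, m) = (a, m + n) := by
  induction n using Int.induction_on generalizing m with
  | zero => simp
  | succ k ih =>
      rw [zpow_add_one, Equiv.Perm.mul_apply, show ((Equiv.prodCongr (Equiv.refl A)
        (Equiv.addRight (1:ℤ)))) (a, m) = (a, m + 1) from rfl, ih]
      simp only [Prod.mk.injEq, true_and, Nat.cast_add, Nat.cast_one]; ring
  | pred k ih =>
      rw [zpow_sub_one, Equiv.Perm.mul_apply, show ((Equiv.prodCongr (Equiv.refl A)
        (Equiv.addRight (1:ℤ)))⁻¹) (a, m) = (a, m - 1) from rfl, ih]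
      simp only [Prod.mk.injEq, true_and]
      ring

/-- (Set-theoretic dilation to a bijection.) For every
`h : A → A` there is a quadruple `(C, i, u, p)` with `i : A → C` injective,
`u : C → C` a bijection (a permutation of `C`), `p` an idempotent with
`p(C) = i(A)`, such that `i(h^[n] a) = p(u^n(i a))` for all `a ∈ A`,
`n ∈ ℤ₊`, and `C = ⋃_{n ∈ ℤ} u^n(i(A))`. -/
theorem stmt_12 {A : Type u} (h : A → A) :
    ∃ (C : Type u) (i : A → C) (u : Equiv.Perm C) (p : C → C),
      Function.Injective i ∧ p ∘ p = p ∧ Set.range p = Set.range i ∧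
      (∀ (a : A) (n : ℕ), i (h^[n] a) = p ((u ^ n) (i a))) ∧
      (⋃ n : ℤ, (u ^ n) '' Set.range i) = Set.univ := by
  refine ⟨A × ℤ, fun a => (a, 0), Equiv.prodCongr (Equiv.refl A) (Equiv.addRight (1:ℤ)),
    fun x => (h^[x.2.toNat] x.1, 0), ?_, ?_, ?_, ?_, ?_⟩
  · intro a b hab; exact (Prod.mk.injEq _ _ _ _ ▸ hab).1
  · funext x; simp
  · apply le_antisymm
    · rintro _ ⟨x, rfl⟩; exact ⟨h^[x.2.toNat] x.1, rfl⟩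
    · rintro _ ⟨a, rfl⟩; exact ⟨(a, 0), rfl⟩
  · intro a n
    rw [show ((Equiv.prodCongr (Equiv.refl A) (Equiv.addRight (1:ℤ))) ^ n) ((a, 0) : A × ℤ)
      = (a, (0:ℤ) + n) from shift_pow_apply n a 0]
    simp
  · ext x
    simp only [Set.mem_iUnion, Set.mem_univ, iff_true]
    exact ⟨x.2, (x.1, 0), ⟨x.1, rfl⟩, by rw [shift_zpow_apply]; simp⟩
end

section
/- Let J be an index set and let { h_j : j ∈ J } be a commuting family of functions on a set A (h_j∘h_k = h_k∘h_j for all j, k ∈ J). Then there exists a quadruple (B, i, (v_j)_{j∈J}, p) where B is a set, i : A → B is injective, (v_j)_{j∈J} is a commuting family of injective maps B → B, and p : B → B is an idempotent with p(B) = i(A), such that i(h_{j₁}∘h_{j₂}∘⋯∘h_{j_k}(a)) = p(v_{j₁}∘v_{j₂}∘⋯∘v_{j_k}(i(a))) for all k ∈ ℤ₊, j₁, …, j_k ∈ J and a ∈ A, and B = { v_{j₁}∘⋯∘v_{j_k}(i(a)) : k ∈ ℤ₊, j₁, …, j_k ∈ J, a ∈ A } (the empty composition being the identity). -/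
/-- (Set-theoretic Ando-type dilation for arbitrary
commuting families.) Let `{h_j : j ∈ J}` be a commuting family of functions
on a set `A`. Then there is a quadruple `(B, i, (v_j), p)` with `i`
injective, `(v_j)` a commuting family of injective maps, `p` an idempotent
with `p(B) = i(A)`, such that for every finite word `j₁,…,j_k` in `J`
(encoded as a list) and every `a ∈ A`,
`i(h_{j₁} ∘ ⋯ ∘ h_{j_k}(a)) = p(v_{j₁} ∘ ⋯ ∘ v_{j_k}(i(a)))`, and `B` is
exactly the set of all `v_{j₁} ∘ ⋯ ∘ v_{j_k}(i(a))`. -/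
theorem stmt_13 {A : Type u} {J : Type w} (h : J → A → A)
    (hcomm : ∀ j k, h j ∘ h k = h k ∘ h j) :
    ∃ (B : Type (max u w)) (i : A → B) (v : J → B → B) (p : B → B),
      Function.Injective i ∧
      (∀ j, Function.Injective (v j)) ∧
      (∀ j k, v j ∘ v k = v k ∘ v j) ∧
      p ∘ p = p ∧ Set.range p = Set.range i ∧
      (∀ (L : List J) (a : A),
        i (L.foldr (fun j x => h j x) a) =
          p (L.foldr (fun j x => v j x) (i a))) ∧
      (∀ b : B, ∃ (L : List J) (a : A),
        b = L.foldr (fun j x => v j x) (i a)) := by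
  haveI : LeftCommutative h := ⟨fun j k a => congrFun (hcomm j k) a⟩
  have key : ∀ (l : List J) (a : A),
      List.foldr (fun j (b : Multiset J × A) => (j ::ₘ b.1, b.2)) (0, a) l = (↑l, a) := by
    intro l a; induction l with
    | nil => simp
    | cons k l ih2 => simp [ih2]
  refine ⟨Multiset J × A, fun a => (0, a), fun j b => (j ::ₘ b.1, b.2),
    fun b => (0, Multiset.foldr h b.2 b.1), ?_, ?_, ?_, ?_, ?_, ?_, ?_⟩
  · intro a b hab; exact (Prod.mk.injEq _ _ _ _ ▸ hab).2
  · intro j b c hbc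
    obtain ⟨h1, h2⟩ := Prod.mk.injEq _ _ _ _ ▸ hbc
    exact Prod.ext ((Multiset.cons_inj_right j).mp h1) h2
  · intro j k; funext b; simp [Multiset.cons_swap]
  · funext b; simp
  · apply Set.eq_of_subset_of_subset
    · rintro _ ⟨b, rfl⟩; exact ⟨Multiset.foldr h b.2 b.1, rfl⟩
    · rintro _ ⟨a, rfl⟩; exact ⟨(0, a), by simp⟩
  · intro L a
    show (0, List.foldr (fun j x => h j x) a L) = _
    rw [key]
    simp [Multiset.coe_foldr]
  · intro b
    refine ⟨b.1.toList, b.2, ?_⟩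
    rw [key]; simp
end

section
/- Let { h_j : j ∈ J } be a commuting family of functions on a set A. Let D ⊆ A be such that h_j restricted to Dᶜ is injective for every j ∈ J, and suppose Dᶜ is left invariant by every h_j (h_j(Dᶜ) ⊆ Dᶜ). Let ℤ_{+,0}^J denote the finitely supported functions from J to ℤ₊, and for α ∈ ℤ_{+,0}^J let h^α denote the composition ∏_{j∈J} h_j^{α(j)} (well defined by commutativity). Define B_D = (Dᶜ × {0}) ∪ (D × ℤ_{+,0}^J), i_D(a) = (a, 0), v_{j,D}(a, 0) = (h_j(a), 0) for a ∈ Dᶜ, v_{j,D}(a, α) = (a, α + δ_j) for a ∈ D (where δ_j(k) = 1 if k = j and 0 otherwise), and p_D(a, α) = (h^α(a), 0). Then (B_D, i_D, (v_{j,D})_{j∈J}, p_D) is a co-invariant, minimal, commuting, injective dilation of { h_j : j ∈ J }: each v_{j,D} is injective, the family (v_{j,D})_{j∈J} commutes, each v_{j,D} leaves B_D \ i_D(A) invariant, p_D is an idempotent with p_D(B_D) = i_D(A), i_D(h_{j₁}∘⋯∘h_{j_k}(a)) = p_D(v_{j₁,D}∘⋯∘v_{j_k,D}(i_D(a))) for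 all k ∈ ℤ₊, j₁,…,j_k ∈ J, a ∈ A, and B_D = { v_{j₁,D}∘⋯∘v_{j_k,D}(i_D(a)) : k ∈ ℤ₊, j₁,…,j_k ∈ J, a ∈ A }. -/
open scoped Classical

/-- For a commuting family `h : J → A → A` and a finitely supported
`α : J →₀ ℕ`, the function `h^α = ∏_{j} h_j^{α(j)}` (well defined, by
commutativity, as a noncommutative product over the support of `α` in the
monoid `Function.End A`). -/
noncomputable def hpow {A : Type*} {J : Type*} (h : J → A → A)
    (hcomm : ∀ j k, h j ∘ h k = h k ∘ h j) (α : J →₀ ℕ) : A → A :=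
  letI f : J → Function.End A := fun j => h j
  (α.support.noncommProd (fun j => f j ^ α j)
    (fun j _ k _ _ =>
      Commute.pow_pow (show Commute (f j) (f k) from hcomm j k) (α j) (α k)) :
    Function.End A)

/-- `B_D = (Dᶜ × {0}) ∪ (D × ℤ_{+,0}^J)`, as a subtype of `A × (J →₀ ℕ)`. -/
def BD14 {A : Type*} (J : Type*) (D : Set A) : Type _ :=
  {x : A × (J →₀ ℕ) // x.1 ∈ D ∨ x.2 = 0}

/-- `i_D(a) = (a, 0)`. -/
def iD14 {A : Type*} (J : Type*) (D : Set A) : A → BD14 J D :=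
  fun a => ⟨(a, 0), Or.inr rfl⟩

/-- `v_{j,D}(a,0) = (h_j(a),0)` for `a ∈ Dᶜ`, and
`v_{j,D}(a,α) = (a, α + δ_j)` for `a ∈ D`. -/
noncomputable def vD14 {A : Type*} {J : Type*} (h : J → A → A) (D : Set A)
    (j : J) : BD14 J D → BD14 J D :=
  fun x =>
    if hx : x.val.1 ∈ D then
      ⟨(x.val.1, x.val.2 + Finsupp.single j 1), Or.inl hx⟩
    else ⟨(h j x.val.1, 0), Or.inr rfl⟩

/-- `p_D(a,α) = (h^α(a), 0)`. -/
noncomputable def pD14 {A : Type*} {J : Type*} (h : J → A → A)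
    (hcomm : ∀ j k, h j ∘ h k = h k ∘ h j) (D : Set A) :
    BD14 J D → BD14 J D :=
  fun x => ⟨(hpow h hcomm x.val.2 x.val.1, 0), Or.inr rfl⟩

section aux
variable {A : Type*} {J : Type*}

def fEnd (h : J → A → A) : J → Function.End A := fun j => h j

variable (h : J → A → A) (hcomm : ∀ j k, h j ∘ h k = h k ∘ h j)

lemma fEnd_comm (hc : ∀ j k, h j ∘ h k = h k ∘ h j) (j k : J) :
    Commute (fEnd h j) (fEnd h k) := hc j k

lemma hpow_eq_noncommProd (α : J →₀ ℕ) (S : Finset J) (hS : α.support ⊆ S) :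
    hpow h hcomm α = (S.noncommProd (fun j => fEnd h j ^ α j)
      (fun j _ k _ _ => Commute.pow_pow (fEnd_comm h hcomm j k) (α j) (α k)) :
      Function.End A) := by
  classical
  unfold hpow
  have hU : S = α.support ∪ (S \ α.support) := by
    rw [Finset.union_sdiff_of_subset hS]
  have hd := Finset.noncommProd_union_of_disjoint (Finset.disjoint_sdiff (s := α.support) (t := S))
    (fun j => fEnd h j ^ α j)
    (fun j _ k _ _ => Commute.pow_pow (fEnd_comm h hcomm j k) (α j) (α k))
  erw [Finset.noncommProd_congr hU (fun x _ => rfl), hd]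
  have h1 : (S \ α.support).noncommProd (fun j => fEnd h j ^ α j)
      (fun j _ k _ _ => Commute.pow_pow (fEnd_comm h hcomm j k) (α j) (α k)) = 1 := by
    erw [Finset.noncommProd_eq_pow_card _ _ _ (1 : Function.End A), one_pow]
    intro x hx
    simp only [Finset.mem_sdiff, Finsupp.mem_support_iff, not_not] at hx
    rw [hx.2, pow_zero]
  rw [h1, mul_one]
  rfl

lemma hpow_zero : hpow h hcomm 0 = id := by
  unfold hpow
  simp only [Finsupp.support_zero]
  rfl

lemma hpow_add (α β : J →₀ ℕ) :
    hpow h hcomm (α + β) = hpow h hcomm α ∘ hpow h hcomm β := by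
  classical
  have hs : (α + β).support ⊆ α.support ∪ β.support := Finsupp.support_add
  rw [hpow_eq_noncommProd h hcomm (α + β) (α.support ∪ β.support) hs,
    hpow_eq_noncommProd h hcomm α (α.support ∪ β.support) Finset.subset_union_left,
    hpow_eq_noncommProd h hcomm β (α.support ∪ β.support) Finset.subset_union_right]
  have he : (fun j => fEnd h j ^ (α + β) j)
      = (fun j => fEnd h j ^ α j) * (fun j => fEnd h j ^ β j) := by
    funext j
    simp [pow_add]
  erw [Finset.noncommProd_congr rfl (fun x _ => congrFun he x)]
  rw [Finset.noncommProd_mul_distrib]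
  · rfl
  · exact fun j _ k _ _ => Commute.pow_pow (fEnd_comm h hcomm j k) _ _

lemma hpow_single (j : J) : hpow h hcomm (Finsupp.single j 1) = h j := by
  classical
  rw [hpow_eq_noncommProd h hcomm _ {j} Finsupp.support_single_subset]
  rw [Finset.noncommProd_singleton]
  simp only [Finsupp.single_eq_same, pow_one]
  rfl

end aux

section main
variable {A : Type*} {J : Type*} (h : J → A → A)
    (hcomm : ∀ j k, h j ∘ h k = h k ∘ h j) (D : Set A)

lemma mem_range_iD14 (y : BD14 J D) :
    y ∈ Set.range (iD14 J D) ↔ y.val.2 = 0 := by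
  constructor
  · rintro ⟨a, rfl⟩; rfl
  · intro h0
    exact ⟨y.val.1, Subtype.ext (Prod.ext rfl h0.symm)⟩

lemma vD14_val_of_mem (j : J) (x : BD14 J D) (hx : x.val.1 ∈ D) :
    (vD14 h D j x).val = (x.val.1, x.val.2 + Finsupp.single j 1) := by
  simp [vD14, hx]

lemma vD14_val_of_not_mem (j : J) (x : BD14 J D) (hx : x.val.1 ∉ D) :
    (vD14 h D j x).val = (h j x.val.1, 0) := by
  simp [vD14, hx]

lemma snd_eq_zero_of_not_mem (x : BD14 J D) (hx : x.val.1 ∉ D) : x.val.2 = 0 :=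
  x.property.resolve_left hx

lemma single_add_ne_zero (j : J) (β : J →₀ ℕ) : β + Finsupp.single j 1 ≠ 0 := by
  intro h0
  have := DFunLike.congr_fun h0 j
  simp at this

lemma phi_vD14 (j : J) (x : BD14 J D) :
    hpow h hcomm (vD14 h D j x).val.2 (vD14 h D j x).val.1
      = h j (hpow h hcomm x.val.2 x.val.1) := by
  by_cases hx : x.val.1 ∈ D
  · rw [vD14_val_of_mem h D j x hx]
    show hpow h hcomm (x.val.2 + Finsupp.single j 1) x.val.1 = _
    rw [add_comm, hpow_add, hpow_single]
    rfl
  · rw [vD14_val_of_not_mem h D j x hx, snd_eq_zero_of_not_mem D x hx]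
    show hpow h hcomm 0 (h j x.val.1) = h j (hpow h hcomm 0 x.val.1)
    rw [hpow_zero]
    rfl

lemma foldr_single (a : J) : ∀ (b : ℕ) (init : J →₀ ℕ),
    (List.replicate b a).foldr (fun j β => β + Finsupp.single j 1) init
      = init + Finsupp.single a b := by
  intro b
  induction b with
  | zero => intro init; simp
  | succ n ih =>
    intro init
    rw [List.replicate_succ, List.foldr_cons, ih init]
    rw [add_assoc, ← Finsupp.single_add]

lemma foldr_add_init (L : List J) (init : J →₀ ℕ) :
    L.foldr (fun j β => β + Finsupp.single j 1) init
      = init + L.foldr (fun j β => β + Finsupp.single j 1) 0 := by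
  induction L with
  | nil => simp
  | cons j L ih =>
    rw [List.foldr_cons, List.foldr_cons, ih, add_assoc]

lemma exists_list_finsupp (α : J →₀ ℕ) :
    ∃ L : List J, L.foldr (fun j β => β + Finsupp.single j 1) 0 = α := by
  classical
  induction α using Finsupp.induction with
  | zero => exact ⟨[], rfl⟩
  | single_add a b f _ _ ih =>
    obtain ⟨L, hL⟩ := ih
    refine ⟨L ++ List.replicate b a, ?_⟩
    rw [List.foldr_append, foldr_single, foldr_add_init, hL, zero_add]

lemma foldr_vD14_of_mem (a : A) (ha : a ∈ D) (L : List J) :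
    L.foldr (fun j x => vD14 h D j x) (iD14 J D a)
      = ⟨(a, L.foldr (fun j β => β + Finsupp.single j 1) 0), Or.inl ha⟩ := by
  induction L with
  | nil => exact Subtype.ext rfl
  | cons j L ih =>
    rw [List.foldr_cons, ih]
    exact Subtype.ext
      (vD14_val_of_mem h D j
        ⟨(a, L.foldr (fun j β => β + Finsupp.single j 1) 0), Or.inl ha⟩ ha)

end main

/-- Let `{h_j : j ∈ J}` be a commuting family on `A`, and
let `D ⊆ A` be such that every `h_j` is injective on `Dᶜ` and leaves `Dᶜ`
invariant. Then `(B_D, i_D, (v_{j,D})_{j∈J}, p_D)` is a co-invariant,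
minimal, commuting, injective dilation of `{h_j : j ∈ J}`. -/
theorem stmt_14 {A : Type*} {J : Type*} (h : J → A → A)
    (hcomm : ∀ j k, h j ∘ h k = h k ∘ h j)
    (D : Set A) (hinj : ∀ j, Set.InjOn (h j) Dᶜ)
    (hinv : ∀ j, h j '' Dᶜ ⊆ Dᶜ) :
    Function.Injective (iD14 J D) ∧
    (∀ j, Function.Injective (vD14 h D j)) ∧
    (∀ j k, vD14 h D j ∘ vD14 h D k = vD14 h D k ∘ vD14 h D j) ∧
    (∀ j, vD14 h D j '' (Set.range (iD14 J D))ᶜ ⊆ (Set.range (iD14 J D))ᶜ) ∧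
    pD14 h hcomm D ∘ pD14 h hcomm D = pD14 h hcomm D ∧
    Set.range (pD14 h hcomm D) = Set.range (iD14 J D) ∧
    (∀ (L : List J) (a : A),
      iD14 J D (L.foldr (fun j x => h j x) a) =
        pD14 h hcomm D (L.foldr (fun j x => vD14 h D j x) (iD14 J D a))) ∧
    (∀ b : BD14 J D, ∃ (L : List J) (a : A),
      b = L.foldr (fun j x => vD14 h D j x) (iD14 J D a)) := by
  refine ⟨?_, ?_, ?_, ?_, ?_, ?_, ?_, ?_⟩
  · -- iD injective
    intro a b hab
    exact congrArg (fun x => x.val.1) hab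
  · -- v_j injective
    intro j x y hxy
    have hval := congrArg Subtype.val hxy
    by_cases hx : x.val.1 ∈ D <;> by_cases hy : y.val.1 ∈ D
    · rw [vD14_val_of_mem h D j x hx, vD14_val_of_mem h D j y hy,
        Prod.mk.injEq] at hval
      exact Subtype.ext (Prod.ext hval.1 (add_right_cancel hval.2))
    · rw [vD14_val_of_mem h D j x hx, vD14_val_of_not_mem h D j y hy,
        Prod.mk.injEq] at hval
      exact absurd hval.2 (single_add_ne_zero j x.val.2)
    · rw [vD14_val_of_not_mem h D j x hx, vD14_val_of_mem h D j y hy,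
        Prod.mk.injEq] at hval
      exact absurd hval.2.symm (single_add_ne_zero j y.val.2)
    · rw [vD14_val_of_not_mem h D j x hx, vD14_val_of_not_mem h D j y hy,
        Prod.mk.injEq] at hval
      exact Subtype.ext (Prod.ext (hinj j hx hy hval.1)
        ((snd_eq_zero_of_not_mem D x hx).trans (snd_eq_zero_of_not_mem D y hy).symm))
  · -- commuting
    intro j k
    funext x
    simp only [Function.comp_apply]
    by_cases hx : x.val.1 ∈ D
    · have hk1 : (vD14 h D k x).val.1 ∈ D := by
        rw [vD14_val_of_mem h D k x hx]; exact hx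
      have hj1 : (vD14 h D j x).val.1 ∈ D := by
        rw [vD14_val_of_mem h D j x hx]; exact hx
      refine Subtype.ext ?_
      rw [vD14_val_of_mem h D j _ hk1, vD14_val_of_mem h D k _ hj1,
        vD14_val_of_mem h D k x hx, vD14_val_of_mem h D j x hx]
      exact Prod.ext rfl (add_right_comm _ _ _)
    · have hk1 : (vD14 h D k x).val.1 ∉ D := by
        rw [vD14_val_of_not_mem h D k x hx]; exact hinv k ⟨x.val.1, hx, rfl⟩
      have hj1 : (vD14 h D j x).val.1 ∉ D := by
        rw [vD14_val_of_not_mem h D j x hx]; exact hinv j ⟨x.val.1, hx, rfl⟩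
      refine Subtype.ext ?_
      rw [vD14_val_of_not_mem h D j _ hk1, vD14_val_of_not_mem h D k _ hj1,
        vD14_val_of_not_mem h D k x hx, vD14_val_of_not_mem h D j x hx]
      exact Prod.ext (congrFun (hcomm j k) x.val.1) rfl
  · -- co-invariance
    intro j y hy
    obtain ⟨x, hx, rfl⟩ := hy
    intro hmem
    rw [mem_range_iD14] at hmem
    have hx' : x ∉ Set.range (iD14 J D) := hx
    rw [mem_range_iD14] at hx'
    have hxD : x.val.1 ∈ D := x.property.resolve_right hx'
    rw [vD14_val_of_mem h D j x hxD] at hmem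
    exact single_add_ne_zero j x.val.2 hmem
  · -- p idempotent
    funext x
    refine Subtype.ext (Prod.ext ?_ rfl)
    show hpow h hcomm 0 (hpow h hcomm x.val.2 x.val.1) = hpow h hcomm x.val.2 x.val.1
    rw [hpow_zero]
    rfl
  · -- range p = range i
    ext y
    rw [mem_range_iD14]
    constructor
    · rintro ⟨x, rfl⟩; rfl
    · intro h0
      refine ⟨y, Subtype.ext (Prod.ext ?_ h0.symm)⟩
      show hpow h hcomm y.val.2 y.val.1 = y.val.1
      rw [h0, hpow_zero]
      rfl
  · -- dilation equation
    intro L a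
    induction L with
    | nil =>
      refine Subtype.ext (Prod.ext ?_ rfl)
      show a = hpow h hcomm 0 a
      rw [hpow_zero]
      rfl
    | cons j L ih =>
      simp only [List.foldr_cons]
      refine Subtype.ext (Prod.ext ?_ rfl)
      show h j (List.foldr (fun j x => h j x) a L)
        = hpow h hcomm
            (vD14 h D j (List.foldr (fun j x => vD14 h D j x) (iD14 J D a) L)).val.2
            (vD14 h D j (List.foldr (fun j x => vD14 h D j x) (iD14 J D a) L)).val.1
      rw [phi_vD14 h hcomm D j]
      exact congrArg (h j) (congrArg (fun z => (Subtype.val z).1) ih)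
  · -- minimality
    intro b
    rcases b.property with hD | h0
    · obtain ⟨L, hL⟩ := exists_list_finsupp b.val.2
      refine ⟨L, b.val.1, ?_⟩
      rw [foldr_vD14_of_mem h D b.val.1 hD L]
      exact Subtype.ext (Prod.ext rfl hL.symm)
    · exact ⟨[], b.val.1, Subtype.ext (Prod.ext rfl h0)⟩
end

section
/- Every family of functions { h_j : j ∈ J } on a set A admits a minimal injective non-commutative dilation: there exist a set B, an injective map i : A → B, injective maps v_j : B → B with v_j(B) ∩ v_k(B) = ∅ for j ≠ k, and an idempotent p : B → B with p(B) = i(A), such that i(h_{j₁}∘h_{j₂}∘⋯∘h_{j_k}(a)) = p(v_{j₁}∘v_{j₂}∘⋯∘v_{j_k}(i(a))) for all k ∈ ℕ, j₁, …, j_k ∈ J and a ∈ A, and B = { v_{j₁}∘⋯∘v_{j_k}(i(a)) : k ∈ ℤ₊, j₁, …, j_k ∈ J, a ∈ A } (the empty composition being the identity). -/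
/-- (Set-theoretic Bunce–Frazho–Popescu dilation.) Every
family of functions `{h_j : j ∈ J}` on a set `A` admits a minimal injective
non-commutative dilation: a set `B`, an injective `i : A → B`, injective
maps `v_j : B → B` with pairwise disjoint ranges, and an idempotent `p`
with `p(B) = i(A)`, such that for every nonempty word `j₁,…,j_k`
(`k ∈ ℕ`, encoded as a nonempty list) and every `a ∈ A`,
`i(h_{j₁} ∘ ⋯ ∘ h_{j_k}(a)) = p(v_{j₁} ∘ ⋯ ∘ v_{j_k}(i(a)))`, and `B` is
exactly the set of all `v_{j₁} ∘ ⋯ ∘ v_{j_k}(i(a))` (`k ∈ ℤ₊`). -/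
theorem stmt_15 {A : Type u} {J : Type w} (h : J → A → A) :
    ∃ (B : Type (max u w)) (i : A → B) (v : J → B → B) (p : B → B),
      Function.Injective i ∧
      (∀ j, Function.Injective (v j)) ∧
      (∀ j k, j ≠ k → Set.range (v j) ∩ Set.range (v k) = ∅) ∧
      p ∘ p = p ∧ Set.range p = Set.range i ∧
      (∀ (L : List J), L ≠ [] → ∀ a : A,
        i (L.foldr (fun j x => h j x) a) =
          p (L.foldr (fun j x => v j x) (i a))) ∧
      (∀ b : B, ∃ (L : List J) (a : A),
        b = L.foldr (fun j x => v j x) (i a)) := by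
  refine ⟨List J × A, fun a => ([], a), fun j b => (j :: b.1, b.2),
    fun b => ([], b.1.foldr (fun j x => h j x) b.2), ?_, ?_, ?_, ?_, ?_, ?_, ?_⟩
  · intro a b hab; simpa using hab
  · intro j b c hbc
    simp only [Prod.mk.injEq, List.cons.injEq] at hbc
    exact Prod.ext hbc.1.2 hbc.2
  · intro j k hjk
    ext b
    simp only [Set.mem_inter_iff, Set.mem_range, Set.mem_empty_iff_false, iff_false]
    rintro ⟨⟨x, hx⟩, ⟨y, hy⟩⟩
    rw [← hx] at hy
    simp only [Prod.mk.injEq, List.cons.injEq] at hy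
    exact hjk hy.1.1.symm
  · funext b; simp
  · ext b
    constructor
    · rintro ⟨x, rfl⟩; exact ⟨_, rfl⟩
    · rintro ⟨a, rfl⟩; exact ⟨([], a), rfl⟩
  · intro L _ a
    have key : ∀ (L : List J),
        (L.foldr (fun j (x : List J × A) => (j :: x.1, x.2)) ([], a)) = (L, a) := by
      intro L; induction L with
      | nil => rfl
      | cons j L ih => simp [ih]
    simp [key]
  · rintro ⟨L, a⟩
    refine ⟨L, a, ?_⟩
    induction L with
    | nil => rfl
    | cons j L ih => simp only [List.foldr_cons]; rw [← ih]
end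

section
/- Let { h_j : j ∈ J } be a family of functions on a set A. Let (B, i, (v_j)_{j∈J}, p) be an injective non-commutative dilation of { h_j : j ∈ J } that is minimal, co-invariant (each v_j leaves B \ i(A) invariant), and has the property that if v_j(i(a)) ∉ i(A) for some a ∈ A and some j ∈ J, then v_k(i(a)) ∉ i(A) for every k ∈ J. Set D = { a ∈ A : v_j(i(a)) ∉ i(A) for some j ∈ J }. Then D is a joint defect space for { h_j : j ∈ J }, and (B, i, (v_j)_{j∈J}, p) is bijectively isomorphic to (B_D, i_D, (v_{j,D})_{j∈J}, p_D): there is a bijection ψ : B_D → B with ψ∘v_{j,D} = v_j∘ψ for every j ∈ J, ψ∘p_D = p∘ψ, and ψ∘i_D = i. -/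
open scoped Classical

/-- `B_D = (Dᶜ × {ω}) ∪ (D × Γ^J)`: here `Γ^J` (finite tuples from `J`
together with the empty tuple `ω`) is encoded as `List J` with `ω = []`,
and `B_D` is the subtype of `A × List J` of pairs `(a, α)` with `a ∈ D` or
`α = ω`. -/
def NCB {A : Type*} (J : Type*) (D : Set A) : Type _ :=
  {x : A × List J // x.1 ∈ D ∨ x.2 = []}

/-- `i_D(a) = (a, ω)`. -/
def ncI {A : Type*} (J : Type*) (D : Set A) : A → NCB J D :=
  fun a => ⟨(a, []), Or.inr rfl⟩

/-- `v_{j,D}(a,ω) = (h_j(a),ω)` for `a ∈ Dᶜ`; `v_{j,D}(a,(j₁,…,j_k)) =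
(a,(j,j₁,…,j_k))` for `a ∈ D` (including the empty tuple). -/
noncomputable def ncV {A : Type*} {J : Type*} (h : J → A → A) (D : Set A)
    (j : J) : NCB J D → NCB J D :=
  fun x =>
    if hx : x.val.1 ∈ D then ⟨(x.val.1, j :: x.val.2), Or.inl hx⟩
    else ⟨(h j x.val.1, []), Or.inr rfl⟩

/-- `p_D(a,ω) = (a,ω)` and `p_D(a,(j₁,…,j_k)) = (h_{j₁} ∘ ⋯ ∘ h_{j_k}(a), ω)`. -/
def ncP {A : Type*} {J : Type*} (h : J → A → A) (D : Set A) :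
    NCB J D → NCB J D :=
  fun x => ⟨(x.val.2.foldr (fun j y => h j y) x.val.1, []), Or.inr rfl⟩

/-- Let `(B, i, (v_j), p)` be a minimal, co-invariant
injective non-commutative dilation of `{h_j : j ∈ J}` such that whenever
`v_j(i(a)) ∉ i(A)` for some `j`, then `v_k(i(a)) ∉ i(A)` for every `k`.
Set `D = {a ∈ A : v_j(i(a)) ∉ i(A) for some j}`. Then `D` is a joint
defect space for `{h_j}`, and `(B, i, (v_j), p)` is bijectively isomorphic
to `(B_D, i_D, (v_{j,D}), p_D)` via a bijection `ψ : B_D → B` with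
`ψ ∘ v_{j,D} = v_j ∘ ψ`, `ψ ∘ p_D = p ∘ ψ`, `ψ ∘ i_D = i`. -/
theorem stmt_16 {A : Type*} {J : Type*} {B : Type*} (h : J → A → A)
    (i : A → B) (v : J → B → B) (p : B → B)
    (hi : Function.Injective i)
    (hv : ∀ j, Function.Injective (v j))
    (hdisj : ∀ j k, j ≠ k → Set.range (v j) ∩ Set.range (v k) = ∅)
    (hp : p ∘ p = p) (hrange : Set.range p = Set.range i)
    (hdil : ∀ (L : List J), L ≠ [] → ∀ a : A,
      i (L.foldr (fun j x => h j x) a) = p (L.foldr (fun j x => v j x) (i a)))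
    (hmin : ∀ b : B, ∃ (L : List J) (a : A),
      b = L.foldr (fun j x => v j x) (i a))
    (hcoinv : ∀ j, v j '' (Set.range i)ᶜ ⊆ (Set.range i)ᶜ)
    (hprop : ∀ a : A, (∃ j, v j (i a) ∉ Set.range i) →
      ∀ k, v k (i a) ∉ Set.range i) :
    let D : Set A := {a : A | ∃ j, v j (i a) ∉ Set.range i}
    (∀ j, Set.InjOn (h j) Dᶜ) ∧
    (∀ j k, j ≠ k → (h j '' Dᶜ) ∩ (h k '' Dᶜ) = ∅) ∧
    ∃ ψ : NCB J D → B, Function.Bijective ψ ∧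
      (∀ j, ψ ∘ ncV h D j = v j ∘ ψ) ∧
      ψ ∘ ncP h D = p ∘ ψ ∧
      ψ ∘ ncI J D = i := by

  intro D
  have pfix : ∀ b ∈ Set.range i, p b = b := by
    intro b hb
    rw [← hrange] at hb
    obtain ⟨c, rfl⟩ := hb
    exact congrFun hp c
  have hstep : ∀ a ∉ D, ∀ j, v j (i a) = i (h j a) := by
    intro a ha j
    have hin : v j (i a) ∈ Set.range i := by
      by_contra hc
      exact ha ⟨j, hc⟩
    have hd := hdil [j] (by simp) a
    simp only [List.foldr] at hd
    rw [hd, pfix _ hin]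
  have hnotin : ∀ a ∈ D, ∀ (L : List J), L ≠ [] →
      L.foldr (fun j x => v j x) (i a) ∉ Set.range i := by
    intro a ha L hL
    induction L with
    | nil => exact absurd rfl hL
    | cons j M ih =>
      cases M with
      | nil =>
        simp only [List.foldr]
        exact hprop a ha j
      | cons k N =>
        have hM := ih (by simp)
        intro hc
        exact hcoinv j ⟨_, hM, rfl⟩ hc
  have hinj : ∀ (L : List J) (a : A), (a ∈ D ∨ L = []) →
      ∀ (L' : List J) (a' : A), (a' ∈ D ∨ L' = []) →
      L.foldr (fun j x => v j x) (i a) = L'.foldr (fun j x => v j x) (i a') →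
      a = a' ∧ L = L' := by
    intro L
    induction L with
    | nil =>
      intro a _ L' a' hL' heq
      cases L' with
      | nil => exact ⟨hi heq, rfl⟩
      | cons j' M' =>
        have ha' : a' ∈ D := hL'.resolve_right (by simp)
        exact absurd ⟨a, heq⟩ (hnotin a' ha' (j' :: M') (by simp))
    | cons j M ih =>
      intro a hL L' a' hL' heq
      have ha : a ∈ D := hL.resolve_right (by simp)
      cases L' with
      | nil =>
        exact absurd ⟨a', heq.symm⟩ (hnotin a ha (j :: M) (by simp))
      | cons j' M' =>
        have ha' : a' ∈ D := hL'.resolve_right (by simp)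
        simp only [List.foldr] at heq
        have hjj : j = j' := by
          by_contra hne
          have hm : v j (M.foldr (fun j x => v j x) (i a)) ∈
              Set.range (v j) ∩ Set.range (v j') := ⟨⟨_, rfl⟩, ⟨_, heq.symm⟩⟩
          rw [hdisj j j' hne] at hm
          exact hm
        subst hjj
        have heq2 := hv j heq
        obtain ⟨h1, h2⟩ := ih a (Or.inl ha) M' a' (Or.inl ha') heq2
        exact ⟨h1, by rw [h2]⟩
  have hsurj : ∀ (L : List J) (a : A), ∃ x : NCB J D,
      x.val.2.foldr (fun j y => v j y) (i x.val.1) =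
        L.foldr (fun j x => v j x) (i a) := by
    intro L a
    induction L with
    | nil => exact ⟨⟨(a, []), Or.inr rfl⟩, rfl⟩
    | cons j M ih =>
      obtain ⟨⟨⟨b, N⟩, hx⟩, hb⟩ := ih
      by_cases hbD : b ∈ D
      · refine ⟨⟨(b, j :: N), Or.inl hbD⟩, ?_⟩
        simp only [List.foldr] at hb ⊢
        rw [hb]
      · have hN : N = [] := hx.resolve_left hbD
        subst hN
        refine ⟨⟨(h j b, []), Or.inr rfl⟩, ?_⟩
        simp only [List.foldr] at hb ⊢
        rw [← hb, ← hstep b hbD j]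
  refine ⟨?_, ?_, ?_⟩
  · intro j a ha a' ha' heq
    apply hi
    apply hv j
    rw [hstep a ha j, hstep a' ha' j, heq]
  · intro j k hjk
    ext b
    simp only [Set.mem_inter_iff, Set.mem_image, Set.mem_empty_iff_false,
      iff_false, not_and]
    rintro ⟨a, ha, rfl⟩ ⟨a', ha', heq⟩
    have hvv : v j (i a) = v k (i a') := by
      rw [hstep a ha j, hstep a' ha' k, heq]
    have hm : v j (i a) ∈ Set.range (v j) ∩ Set.range (v k) :=
      ⟨⟨_, rfl⟩, ⟨_, hvv.symm⟩⟩
    rw [hdisj j k hjk] at hm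
    exact hm
  · refine ⟨fun x => x.val.2.foldr (fun j y => v j y) (i x.val.1),
      ⟨?_, ?_⟩, ?_, ?_, ?_⟩
    · rintro ⟨⟨a, L⟩, hx⟩ ⟨⟨a', L'⟩, hx'⟩ heq
      obtain ⟨rfl, rfl⟩ := hinj L a hx L' a' hx' heq
      rfl
    · intro b
      obtain ⟨L, a, hb⟩ := hmin b
      obtain ⟨x, hx⟩ := hsurj L a
      exact ⟨x, hx.trans hb.symm⟩
    · intro j
      funext x
      obtain ⟨⟨a, L⟩, hx⟩ := x
      simp only [Function.comp, ncV]
      by_cases haD : a ∈ D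
      · show List.foldr (fun j y => v j y) (i (ncV h D j ⟨(a, L), hx⟩).val.1) (ncV h D j ⟨(a, L), hx⟩).val.2 = _
        rw [show ncV h D j ⟨(a, L), hx⟩ = ⟨(a, j :: L), Or.inl haD⟩ from dif_pos haD]
        rfl
      · show List.foldr (fun j y => v j y) (i (ncV h D j ⟨(a, L), hx⟩).val.1) (ncV h D j ⟨(a, L), hx⟩).val.2 = _
        rw [show ncV h D j ⟨(a, L), hx⟩ = ⟨(h j a, []), Or.inr rfl⟩ from dif_neg haD]
        have hL : L = [] := hx.resolve_left haD
        subst hL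
        simp only [List.foldr]
        exact (hstep a haD j).symm
    · funext x
      obtain ⟨⟨a, L⟩, hx⟩ := x
      simp only [Function.comp, ncP]
      cases L with
      | nil => exact (pfix _ ⟨a, rfl⟩).symm
      | cons j M => exact hdil (j :: M) (by simp) a
    · funext a
      rfl
end

section
/- Let A be a set and let v, v₁, v₂ : A → A be injective functions with v = v₁∘v₂ = v₂∘v₁. Let W = A \ v(A), W₁ = A \ v₁(A), and W₂ = A \ v₂(A). Then W decomposes as the disjoint union W = W₁ ⊔ v₁(W₂) and also as the disjoint union W = v₂(W₁) ⊔ W₂. Consequently, the map u : W → W defined by u(w₁) = v₂(w₁) for w₁ ∈ W₁ and u(v₁(w₂)) = w₂ for w₂ ∈ W₂ is a well-defined bijection of W. -/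
/-- (Key step of the set-theoretic Berger–Coburn–Lebow
theorem.) Let `v, v₁, v₂ : A → A` be injective with `v = v₁ ∘ v₂ = v₂ ∘ v₁`,
and set `W = A \ v(A)`, `W₁ = A \ v₁(A)`, `W₂ = A \ v₂(A)`. Then
`W = W₁ ⊔ v₁(W₂)` and `W = v₂(W₁) ⊔ W₂` (disjoint unions), and the map
`u : W → W` with `u(w₁) = v₂(w₁)` for `w₁ ∈ W₁` and `u(v₁(w₂)) = w₂` for
`w₂ ∈ W₂` is a well-defined bijection of `W`. -/
theorem stmt_17 {A : Type*} (v v₁ v₂ : A → A)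
    (hv : Function.Injective v)
    (hv₁ : Function.Injective v₁) (hv₂ : Function.Injective v₂)
    (hfac₁ : v = v₁ ∘ v₂) (hfac₂ : v = v₂ ∘ v₁) :
    let W : Set A := (Set.range v)ᶜ
    let W₁ : Set A := (Set.range v₁)ᶜ
    let W₂ : Set A := (Set.range v₂)ᶜ
    (W = W₁ ∪ v₁ '' W₂ ∧ W₁ ∩ v₁ '' W₂ = ∅) ∧
    (W = v₂ '' W₁ ∪ W₂ ∧ (v₂ '' W₁) ∩ W₂ = ∅) ∧
    ∃ u : A → A, Set.BijOn u W W ∧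
      (∀ w ∈ W₁, u w = v₂ w) ∧ (∀ w ∈ W₂, u (v₁ w) = w) := by
  intro W W₁ W₂
  have key1 : ∀ a, a ∈ W ↔ (a ∈ W₁ ∨ a ∈ v₁ '' W₂) := by
    intro a
    constructor
    · intro ha
      by_cases h1 : a ∈ Set.range v₁
      · obtain ⟨x, hx⟩ := h1
        refine Or.inr ⟨x, ?_, hx⟩
        rintro ⟨y, hy⟩
        exact ha ⟨y, by rw [hfac₁]; simp [Function.comp, hy, hx]⟩
      · exact Or.inl h1
    · rintro (h | ⟨x, hx, rfl⟩)
      · rintro ⟨y, hy⟩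
        rw [hfac₁] at hy
        exact h ⟨v₂ y, hy⟩
      · rintro ⟨y, hy⟩
        rw [hfac₁] at hy
        exact hx ⟨y, hv₁ hy⟩
  have key2 : ∀ a, a ∈ W ↔ (a ∈ v₂ '' W₁ ∨ a ∈ W₂) := by
    intro a
    constructor
    · intro ha
      by_cases h2 : a ∈ Set.range v₂
      · obtain ⟨x, hx⟩ := h2
        refine Or.inl ⟨x, ?_, hx⟩
        rintro ⟨y, hy⟩
        exact ha ⟨y, by rw [hfac₂]; simp [Function.comp, hy, hx]⟩
      · exact Or.inr h2
    · rintro (⟨x, hx, rfl⟩ | h)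
      · rintro ⟨y, hy⟩
        rw [hfac₂] at hy
        exact hx ⟨y, hv₂ hy⟩
      · rintro ⟨y, hy⟩
        rw [hfac₂] at hy
        exact h ⟨v₁ y, hy⟩
  have dec1 : W = W₁ ∪ v₁ '' W₂ := Set.ext fun a => key1 a
  have dec2 : W = v₂ '' W₁ ∪ W₂ := Set.ext fun a => key2 a
  have disj1 : W₁ ∩ v₁ '' W₂ = ∅ := by
    ext a
    simp only [Set.mem_inter_iff, Set.mem_empty_iff_false, iff_false]
    rintro ⟨h1, ⟨x, _, rfl⟩⟩
    exact h1 ⟨x, rfl⟩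
  have disj2 : (v₂ '' W₁) ∩ W₂ = ∅ := by
    ext a
    simp only [Set.mem_inter_iff, Set.mem_empty_iff_false, iff_false]
    rintro ⟨⟨x, _, rfl⟩, h2⟩
    exact h2 ⟨x, rfl⟩
  refine ⟨⟨dec1, disj1⟩, ⟨dec2, disj2⟩, ?_⟩
  cases isEmpty_or_nonempty A with
  | inl h =>
    refine ⟨id, ?_, ?_, ?_⟩
    · exact ⟨fun a _ => (h.false a).elim, fun a _ => (h.false a).elim,
        fun a _ => (h.false a).elim⟩
    · exact fun a _ => (h.false a).elim
    · exact fun a _ => (h.false a).elim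
  | inr h =>
    classical
    set u : A → A := fun a => if a ∈ Set.range v₁ then Function.invFun v₁ a else v₂ a with hu
    have hu₁ : ∀ w ∈ W₁, u w = v₂ w := by
      intro w hw
      simp only [hu, if_neg hw]
    have hu₂ : ∀ w ∈ W₂, u (v₁ w) = w := by
      intro w _
      simp only [hu, if_pos (Set.mem_range_self w)]
      exact Function.leftInverse_invFun hv₁ w
    have mapsW₁ : ∀ a ∈ W₁, u a ∈ v₂ '' W₁ := fun a ha => ⟨a, ha, (hu₁ a ha).symm⟩
    have mapsIm : ∀ a ∈ v₁ '' W₂, u a ∈ W₂ := by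
      rintro _ ⟨x, hx, rfl⟩
      rw [hu₂ x hx]; exact hx
    refine ⟨u, ⟨?_, ?_, ?_⟩, hu₁, hu₂⟩
    · -- MapsTo
      intro a ha
      rcases (key1 a).1 ha with h1 | h1
      · exact (key2 _).2 (Or.inl (mapsW₁ a h1))
      · exact (key2 _).2 (Or.inr (mapsIm a h1))
    · -- InjOn
      intro a ha b hb hab
      rcases (key1 a).1 ha with h1 | h1 <;> rcases (key1 b).1 hb with h2 | h2
      · have := hu₁ a h1 ▸ hu₁ b h2 ▸ hab
        exact hv₂ this
      · exfalso
        obtain ⟨x, hx, rfl⟩ := h2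
        rw [hu₁ a h1, hu₂ x hx] at hab
        exact hx ⟨a, hab⟩
      · exfalso
        obtain ⟨x, hx, rfl⟩ := h1
        rw [hu₁ b h2, hu₂ x hx] at hab
        exact hx ⟨b, hab.symm⟩
      · obtain ⟨x, hx, rfl⟩ := h1
        obtain ⟨y, hy, rfl⟩ := h2
        rw [hu₂ x hx, hu₂ y hy] at hab
        rw [hab]
    · -- SurjOn
      intro b hb
      rcases (key2 b).1 hb with h1 | h1
      · obtain ⟨x, hx, rfl⟩ := h1
        exact ⟨x, (key1 x).2 (Or.inl hx), hu₁ x hx⟩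
      · exact ⟨v₁ b, (key1 _).2 (Or.inr ⟨b, h1, rfl⟩), hu₂ b h1⟩
end

section
/- Let S be a left cancellative monoid (s·t = s·t′ implies t = t′). Suppose A is a set and { h_s : s ∈ S } is a family of functions A → A such that h_{s·t} = h_s∘h_t for all s, t ∈ S and h₁ = id_A (where 1 is the identity of S). Then there exists a quadruple (B, i, { v_s : s ∈ S }, p) where B is a set, i : A → B is injective, each v_s : B → B is injective with v_{s·t} = v_s∘v_t for all s, t ∈ S and v₁ = id_B, and p : B → B is an idempotent with p(B) = i(A), such that p(v_s(i(a))) = i(h_s(a)) for all s ∈ S and a ∈ A, and B = { v_s(i(a)) : s ∈ S, a ∈ A }. -/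
/-- (Standard dilation of a monoid action.) Let `S` be a
left cancellative monoid and let `{h_s : s ∈ S}` be a family of functions
on a set `A` with `h_{s·t} = h_s ∘ h_t` and `h₁ = id`. Then there is a
quadruple `(B, i, {v_s}, p)` with `i : A → B` injective, each `v_s : B → B`
injective with `v_{s·t} = v_s ∘ v_t`, `v₁ = id`, and `p` an idempotent with
`p(B) = i(A)`, such that `p(v_s(i(a))) = i(h_s(a))` for all `s ∈ S`,
`a ∈ A`, and `B = {v_s(i(a)) : s ∈ S, a ∈ A}`. -/
theorem stmt_18 {S : Type u} [Monoid S]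
    (hcancel : ∀ s t t' : S, s * t = s * t' → t = t')
    {A : Type v} (h : S → A → A)
    (hmul : ∀ s t : S, h (s * t) = h s ∘ h t)
    (hone : h 1 = id) :
    ∃ (B : Type (max u v)) (i : A → B) (v : S → B → B) (p : B → B),
      Function.Injective i ∧
      (∀ s, Function.Injective (v s)) ∧
      (∀ s t : S, v (s * t) = v s ∘ v t) ∧
      v 1 = id ∧
      p ∘ p = p ∧ Set.range p = Set.range i ∧
      (∀ (s : S) (a : A), p (v s (i a)) = i (h s a)) ∧
      (∀ b : B, ∃ (s : S) (a : A), b = v s (i a)) := by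
  refine ⟨S × A, fun a => (1, a), fun s b => (s * b.1, b.2),
    fun b => (1, h b.1 b.2), ?_, ?_, ?_, ?_, ?_, ?_, ?_, ?_⟩
  · intro a a' hh
    simpa using hh
  · intro s b b' hh
    obtain ⟨h1, h2⟩ := Prod.mk.injEq .. ▸ hh
    exact Prod.ext (hcancel s _ _ h1) h2
  · intro s t
    funext b
    simp [mul_assoc]
  · funext b
    simp
  · funext b
    simp [hone]
  · ext b
    constructor
    · rintro ⟨c, rfl⟩
      exact ⟨h c.1 c.2, rfl⟩
    · rintro ⟨a, rfl⟩
      exact ⟨(1, a), by simp [hone]⟩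
  · intro s a
    simp
  · intro b
    exact ⟨b.1, b.2, by simp⟩
end

section
/- Let A be a vector space over a field K and let h : A → A be a linear map. Then h admits a minimal injective linear dilation: there exist a vector space B over K, an injective linear map i : A → B, an injective linear map v : B → B, and a linear idempotent p : B → B (p∘p = p) with p(B) = i(A), such that i(h^n(a)) = p(v^n(i(a))) for all n ∈ ℤ₊ and a ∈ A, and B = span{ v^n(i(a)) : n ∈ ℤ₊, a ∈ A }. -/
/-- (Minimal injective linear dilation.) Every linear map
`h : A → A` on a vector space `A` over a field `K` admits a minimal
injective linear dilation: a vector space `B` over `K`, injective linear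
maps `i : A → B` and `v : B → B`, and a linear idempotent `p : B → B` with
`p(B) = i(A)`, such that `i(h^[n] a) = p(v^[n](i a))` for all `n ∈ ℤ₊`,
`a ∈ A`, and `B = span {v^[n](i a) : n ∈ ℤ₊, a ∈ A}`. -/
theorem stmt_19 {K : Type u} [Field K] {A : Type v}
    [AddCommGroup A] [Module K A] (h : A →ₗ[K] A) :
    ∃ (B : Type v) (_ : AddCommGroup B) (_ : Module K B)
      (i : A →ₗ[K] B) (v : B →ₗ[K] B) (p : B →ₗ[K] B),
      Function.Injective i ∧ Function.Injective v ∧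
      p ∘ₗ p = p ∧ LinearMap.range p = LinearMap.range i ∧
      (∀ (n : ℕ) (a : A), i ((⇑h)^[n] a) = p ((⇑v)^[n] (i a))) ∧
      Submodule.span K {b : B | ∃ (n : ℕ) (a : A), b = (⇑v)^[n] (i a)} = ⊤ := by
  classical
  refine ⟨ℕ →₀ A, inferInstance, inferInstance, Finsupp.lsingle 0,
    Finsupp.lmapDomain A K Nat.succ
      + (Finsupp.lsingle 0 ∘ₗ h ∘ₗ Finsupp.lapply 0),
    Finsupp.lsingle 0 ∘ₗ Finsupp.lapply 0, ?_, ?_, ?_, ?_, ?_, ?_⟩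
  · intro a b hab
    simpa using congrArg (fun f : ℕ →₀ A => f 0) hab
  · -- injectivity of v
    intro x y hxy
    ext k
    have key : ∀ z : ℕ →₀ A, ∀ k : ℕ,
        (((Finsupp.lmapDomain A K Nat.succ
          + (Finsupp.lsingle 0 ∘ₗ h ∘ₗ Finsupp.lapply 0)) :
            (ℕ →₀ A) →ₗ[K] (ℕ →₀ A)) z) (k + 1) = z k := by
      intro z k
      have : Finsupp.mapDomain Nat.succ z (k + 1) = z k :=
        Finsupp.mapDomain_apply Nat.succ_injective z k
      simp [Finsupp.lmapDomain, this]
    rw [← key x k, ← key y k, hxy]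
  · -- p ∘ p = p
    ext a : 2
    simp
  · -- range p = range i
    apply le_antisymm
    · rintro _ ⟨x, rfl⟩
      exact ⟨x 0, rfl⟩
    · rintro _ ⟨a, rfl⟩
      exact ⟨Finsupp.single 0 a, by simp⟩
  · -- dilation identity
    intro n a
    set v : (ℕ →₀ A) →ₗ[K] (ℕ →₀ A) :=
      Finsupp.lmapDomain A K Nat.succ
        + (Finsupp.lsingle 0 ∘ₗ h ∘ₗ Finsupp.lapply 0) with hv
    have head : ∀ z : ℕ →₀ A, (v z) 0 = h (z 0) := by
      intro z
      have : Finsupp.mapDomain Nat.succ z 0 = 0 :=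
        Finsupp.mapDomain_notin_range _ _ (by simp [Set.range, Nat.succ_ne_zero])
      simp [hv, Finsupp.lmapDomain, this]
    have key : ∀ n : ℕ, ((⇑v)^[n] (Finsupp.single 0 a)) 0 = (⇑h)^[n] a := by
      intro n
      induction n with
      | zero => simp
      | succ n ih =>
          rw [Function.iterate_succ_apply', Function.iterate_succ_apply', head, ih]
    simp only [LinearMap.coe_comp, Function.comp_apply, Finsupp.lapply_apply,
      Finsupp.lsingle_apply, key]
  · -- span condition
    set i : A →ₗ[K] (ℕ →₀ A) := Finsupp.lsingle 0 with hi
    set v : (ℕ →₀ A) →ₗ[K] (ℕ →₀ A) :=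
      Finsupp.lmapDomain A K Nat.succ
        + (Finsupp.lsingle 0 ∘ₗ h ∘ₗ Finsupp.lapply 0) with hv
    set S : Set (ℕ →₀ A) := {b | ∃ (n : ℕ) (a : A), b = (⇑v)^[n] (i a)} with hS
    have hmemS : ∀ (n : ℕ) (a : A), (⇑v)^[n] (i a) ∈ S := fun n a => ⟨n, a, rfl⟩
    have hinv : ∀ x ∈ Submodule.span K S, v x ∈ Submodule.span K S := by
      intro x hx
      have : (Submodule.span K S).map v ≤ Submodule.span K S := by
        rw [Submodule.map_span]
        apply Submodule.span_le.2
        rintro _ ⟨_, ⟨n, a, rfl⟩, rfl⟩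
        have : v ((⇑v)^[n] (i a)) = (⇑v)^[n + 1] (i a) :=
          (Function.iterate_succ_apply' (⇑v) n (i a)).symm
        rw [this]
        exact Submodule.subset_span (hmemS _ _)
      exact this ⟨x, hx, rfl⟩
    have hsingle : ∀ (n : ℕ) (a : A), Finsupp.single n a ∈ Submodule.span K S := by
      intro n
      induction n with
      | zero =>
          intro a
          exact Submodule.subset_span ⟨0, a, by simp [hi]⟩
      | succ n ih =>
          intro a
          have hvs : v (Finsupp.single n a)
              = Finsupp.single (n + 1) a + Finsupp.single 0 (h ((Finsupp.single n a) 0)) := by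
            simp [hv, Finsupp.lmapDomain, Finsupp.mapDomain_single]
          have h1 : v (Finsupp.single n a) ∈ Submodule.span K S := hinv _ (ih a)
          have h2 : Finsupp.single 0 (h ((Finsupp.single n a) 0)) ∈ Submodule.span K S :=
            Submodule.subset_span ⟨0, h ((Finsupp.single n a) 0), by simp [hi]⟩
          have : Finsupp.single (n + 1) a
              = v (Finsupp.single n a) - Finsupp.single 0 (h ((Finsupp.single n a) 0)) := by
            rw [hvs]; abel
          rw [this]
          exact Submodule.sub_mem _ h1 h2
    rw [eq_top_iff]
    intro x _
    have hx : x = x.sum fun n a => Finsupp.single n a := (Finsupp.sum_single x).symm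
    rw [hx]
    exact Submodule.sum_mem _ fun n _ => hsingle n _
end
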